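/- Let γ > 0, 0 < λ < 2, and consider one iteration u = prox_{γh}(s), v = prox_{γg}(s), s⁺ = s + λ(v − u). Then s⁺ = s − γλ∇φ_γ(s) and the sufficient-decrease inequality φ_γ(s⁺) ≤ φ_γ(s) − (λ(2 − λ)/(2γ))‖u − v‖² holds. -/

import Mathlib

open scoped InnerProductSpace
noncomputable section

/-- `ℝ^p` as a Euclidean space. -/
abbrev Euc (p : ℕ) := EuclideanSpace ℝ (Fin p)

variable {p : ℕ}

/-- `f : ℝ^p → ℝ ∪ {∞}` (modelled with `EReal` values never equal to `-∞`) is proper. -/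
def ProperFun (f : Euc p → EReal) : Prop :=
  (∀ x, f x ≠ ⊥) ∧ (∃ x, f x ≠ ⊤)

/-- Convexity for extended-real-valued functions. -/
def ConvexFun (f : Euc p → EReal) : Prop :=
  ∀ x y : Euc p, ∀ t : ℝ, 0 ≤ t → t ≤ 1 →
    f (t • x + (1 - t) • y) ≤ (t : EReal) * f x + ((1 - t : ℝ) : EReal) * f y

/-- The convex subdifferential `∂f(x)`. -/
def Subdiff (f : Euc p → EReal) (x : Euc p) : Set (Euc p) :=
  {v | ∀ z, f x + ((⟪v, z - x⟫_ℝ : ℝ) : EReal) ≤ f z}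

/-- `u` minimizes `w ↦ f(w) + (1/(2γ))‖w − x‖²`. -/
def ProxObjMin (f : Euc p → EReal) (γ : ℝ) (x u : Euc p) : Prop :=
  ∀ w, f u + ((1/(2*γ) * ‖u - x‖^2 : ℝ) : EReal) ≤ f w + ((1/(2*γ) * ‖w - x‖^2 : ℝ) : EReal)

/-- `u = prox_{γf}(x)`: `u` is the unique minimizer of `w ↦ f(w) + (1/(2γ))‖w − x‖²`. -/
def IsProxOf (f : Euc p → EReal) (γ : ℝ) (x u : Euc p) : Prop :=
  ProxObjMin f γ x u ∧ ∀ w, ProxObjMin f γ x w → w = u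

/-- The Moreau envelope `f^γ(x) = inf_w { f(w) + (1/(2γ))‖w − x‖² }`, as an extended real. -/
def moreau (f : Euc p → EReal) (γ : ℝ) (x : Euc p) : EReal :=
  ⨅ w : Euc p, f w + ((1/(2*γ) * ‖w - x‖^2 : ℝ) : EReal)

/-- The (real-valued) Moreau envelope. -/
def moreauR (f : Euc p → EReal) (γ : ℝ) (x : Euc p) : ℝ := (moreau f γ x).toReal

/-- The DC envelope `φ_γ = g^γ − h^γ`. -/
def dce (g h : Euc p → EReal) (γ : ℝ) (s : Euc p) : ℝ := moreauR g γ s - moreauR h γ s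

/-- The DC function `φ = g − h`, with the convention `∞ − ∞ = ∞`. -/
def dcVal (g h : Euc p → EReal) (x : Euc p) : EReal :=
  if g x = ⊤ then ⊤ else g x - h x


/-!
The first-order condition of the prox problem makes `γ⁻¹ (s - u)` a subgradient of `f` at
`u = prox_{γf}(s)`. This gives an affine minorant of `f^γ` with slope `γ⁻¹ (s - u)` touching at
`s`, while testing the infimum at `w = u` gives a quadratic majorant with the same slope. Doing this
for `g` and `h` and subtracting sandwiches `φ_γ` between
`y ↦ φ_γ(s) + γ⁻¹ ⟪u - v, y - s⟫ ± (1/(2γ)) ‖y - s‖²`, which identifies `∇φ_γ(s) = γ⁻¹ (u - v)`;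
the upper bound at `y = s⁺ = s - λ (u - v)` is the sufficient decrease.
-/

open Filter Topology

lemma le_of_forall_pos_le_add_mul {a b C : ℝ} (h : ∀ t, 0 < t → t ≤ 1 → a ≤ b + t * C) :
    a ≤ b := by
  have hlim : Tendsto (fun t : ℝ => b + t * C) (𝓝[>] 0) (𝓝 b) := by
    have hcont : Continuous fun t : ℝ => b + t * C := by fun_prop
    simpa using (hcont.tendsto 0).mono_left nhdsWithin_le_nhds
  refine ge_of_tendsto hlim ?_
  filter_upwards [Ioc_mem_nhdsGT one_pos] with t ht using h t ht.1 ht.2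

lemma inv_eq_two_mul_one_div_two_mul (γ : ℝ) : γ⁻¹ = 2 * (1/(2*γ)) := by
  field_simp

theorem hasGradientAt_of_abs_sub_sub_inner_le {E : Type*} [NormedAddCommGroup E]
    [InnerProductSpace ℝ E] [CompleteSpace E] {F : E → ℝ} {a x : E} {C : ℝ}
    (h : ∀ y, |F y - F x - ⟪a, y - x⟫_ℝ| ≤ C * ‖y - x‖ ^ 2) : HasGradientAt F a x := by
  rw [hasGradientAt_iff_hasFDerivAt, hasFDerivAt_iff_isLittleO_nhds_zero]
  refine Asymptotics.IsBigO.trans_isLittleO ?_ (Asymptotics.isLittleO_norm_pow_id one_lt_two)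
  refine Asymptotics.IsBigO.of_bound C (Eventually.of_forall fun y => ?_)
  simpa [InnerProductSpace.toDual_apply_apply] using h (x + y)

lemma moreau_le (f : Euc p → EReal) (γ : ℝ) (x w : Euc p) :
    moreau f γ x ≤ f w + ((1/(2*γ) * ‖w - x‖^2 : ℝ) : EReal) :=
  iInf_le (fun w => f w + ((1/(2*γ) * ‖w - x‖^2 : ℝ) : EReal)) w

namespace ProxObjMin

variable {f : Euc p → EReal} {γ : ℝ} {s u : Euc p}

lemma ne_top (hf : ProperFun f) (hu : ProxObjMin f γ s u) : f u ≠ ⊤ := by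
  obtain ⟨x, hx⟩ := hf.2
  intro htop
  have hle := hu x
  rw [htop, EReal.top_add_coe, top_le_iff] at hle
  exact EReal.add_ne_top hx (EReal.coe_ne_top _) hle

lemma coe_toReal (hf : ProperFun f) (hu : ProxObjMin f γ s u) : ((f u).toReal : EReal) = f u :=
  EReal.coe_toReal (hu.ne_top hf) (hf.1 u)

lemma inv_smul_sub_mem_subdiff (hf : ProperFun f) (hfc : ConvexFun f) (hu : ProxObjMin f γ s u) :
    γ⁻¹ • (s - u) ∈ Subdiff f u := by
  intro w
  rcases eq_or_ne (f w) ⊤ with hw | hw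
  · simp [hw]
  have hfu := (hu.coe_toReal hf).symm
  have hfw := (EReal.coe_toReal hw (hf.1 w)).symm
  set fu := (f u).toReal
  set fw := (f w).toReal
  rw [hfu, hfw, ← EReal.coe_add, EReal.coe_le_coe_iff, real_inner_smul_left]
  have hc := inv_eq_two_mul_one_div_two_mul γ
  refine le_of_forall_pos_le_add_mul (C := 1/(2*γ) * ‖w - u‖^2) fun t ht0 ht1 => ?_
  -- minimality of `u` against the point `u + t (w - u)` of the segment, bounded by convexity
  have hseg : fu + 1/(2*γ) * ‖u - s‖^2 ≤
      t * fw + (1 - t) * fu + 1/(2*γ) * ‖(u - s) + t • (w - u)‖^2 := by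
    have hpt : t • w + (1 - t) • u - s = (u - s) + t • (w - u) := by module
    have hle := (hu (t • w + (1 - t) • u)).trans (add_le_add (hfc w u t ht0.le ht1) le_rfl)
    rw [hpt, hfu, hfw] at hle
    exact_mod_cast hle
  rw [norm_add_sq_real, real_inner_smul_right, norm_smul, mul_pow, Real.norm_eq_abs, sq_abs,
    ← neg_sub s u, inner_neg_left] at hseg
  refine le_of_mul_le_mul_left ?_ ht0
  rw [hc]
  linear_combination hseg

lemma coe_le_moreau (hf : ProperFun f) (hfc : ConvexFun f) (hγ : 0 ≤ γ)
    (hu : ProxObjMin f γ s u) (y : Euc p) :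
    (((f u).toReal + 1/(2*γ) * ‖u - s‖^2 + γ⁻¹ * ⟪s - u, y - s⟫_ℝ : ℝ) : EReal) ≤
      moreau f γ y := by
  refine le_iInf fun w => ?_
  have hsub := hu.inv_smul_sub_mem_subdiff hf hfc w
  rw [← hu.coe_toReal hf, real_inner_smul_left] at hsub
  refine le_trans ?_ (add_le_add hsub le_rfl)
  rw [← EReal.coe_add, ← EReal.coe_add, EReal.coe_le_coe_iff]
  have hc := inv_eq_two_mul_one_div_two_mul γ
  have hc0 : 0 ≤ 1/(2*γ) := by positivity
  set b := (w - u) - (y - s)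
  have hwy : w - y = b - (s - u) := by module
  have hinner : ⟪s - u, w - u⟫_ℝ - ⟪s - u, y - s⟫_ℝ = ⟪b, s - u⟫_ℝ := by
    rw [← inner_sub_right, real_inner_comm]
  rw [hwy, norm_sub_sq_real b, norm_sub_rev u s, hc]
  linear_combination -(2 * (1/(2*γ))) * hinner + mul_nonneg hc0 (sq_nonneg ‖b‖)

lemma moreau_eq (hf : ProperFun f) (hfc : ConvexFun f) (hγ : 0 ≤ γ) (hu : ProxObjMin f γ s u) :
    moreau f γ s = (((f u).toReal + 1/(2*γ) * ‖u - s‖^2 : ℝ) : EReal) := by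
  refine le_antisymm ?_ ?_
  · rw [EReal.coe_add, hu.coe_toReal hf]
    exact moreau_le f γ s u
  · simpa using hu.coe_le_moreau hf hfc hγ s

lemma coe_moreauR (hf : ProperFun f) (hfc : ConvexFun f) (hγ : 0 ≤ γ) (hu : ProxObjMin f γ s u)
    (y : Euc p) : (moreauR f γ y : EReal) = moreau f γ y := by
  refine EReal.coe_toReal (ne_top_of_le_ne_top ?_ (moreau_le f γ y u))
    (ne_bot_of_le_ne_bot (EReal.coe_ne_bot _) (hu.coe_le_moreau hf hfc hγ y))
  exact EReal.add_ne_top (hu.ne_top hf) (EReal.coe_ne_top _)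

lemma moreauR_add_inner_le (hf : ProperFun f) (hfc : ConvexFun f) (hγ : 0 ≤ γ)
    (hu : ProxObjMin f γ s u) (y : Euc p) :
    moreauR f γ s + γ⁻¹ * ⟪s - u, y - s⟫_ℝ ≤ moreauR f γ y := by
  rw [← EReal.coe_le_coe_iff, hu.coe_moreauR hf hfc hγ, EReal.coe_add,
    hu.coe_moreauR hf hfc hγ, hu.moreau_eq hf hfc hγ, ← EReal.coe_add]
  exact hu.coe_le_moreau hf hfc hγ y

lemma moreauR_le (hf : ProperFun f) (hfc : ConvexFun f) (hγ : 0 ≤ γ)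
    (hu : ProxObjMin f γ s u) (y : Euc p) :
    moreauR f γ y ≤ moreauR f γ s + γ⁻¹ * ⟪s - u, y - s⟫_ℝ + 1/(2*γ) * ‖y - s‖^2 := by
  have hup : moreauR f γ y ≤ (f u).toReal + 1/(2*γ) * ‖u - y‖^2 := by
    rw [← EReal.coe_le_coe_iff, hu.coe_moreauR hf hfc hγ, EReal.coe_add, hu.coe_toReal hf]
    exact moreau_le f γ y u
  have hs : moreauR f γ s = (f u).toReal + 1/(2*γ) * ‖u - s‖^2 := by
    rw [← EReal.coe_eq_coe_iff, hu.coe_moreauR hf hfc hγ, hu.moreau_eq hf hfc hγ]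
  have hc := inv_eq_two_mul_one_div_two_mul γ
  rw [show u - y = (u - s) - (y - s) by abel, norm_sub_sq_real, ← neg_sub s u,
    inner_neg_left, norm_neg, norm_sub_rev s u] at hup
  rw [hs, hc]
  linear_combination hup

end ProxObjMin

lemma abs_dce_sub_sub_inner_le {g h : Euc p → EReal} (hg : ProperFun g) (hgc : ConvexFun g)
    (hh : ProperFun h) (hhc : ConvexFun h) {γ : ℝ} (hγ : 0 ≤ γ) {s u v : Euc p}
    (hu : ProxObjMin h γ s u) (hv : ProxObjMin g γ s v) (y : Euc p) :
    |dce g h γ y - dce g h γ s - ⟪γ⁻¹ • (u - v), y - s⟫_ℝ| ≤ 1/(2*γ) * ‖y - s‖^2 := by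
  have hinner : ⟪γ⁻¹ • (u - v), y - s⟫_ℝ = γ⁻¹ * ⟪s - v, y - s⟫_ℝ - γ⁻¹ * ⟪s - u, y - s⟫_ℝ := by
    rw [real_inner_smul_left, ← mul_sub, ← inner_sub_left, sub_sub_sub_cancel_left]
  have hg₁ := hv.moreauR_add_inner_le hg hgc hγ y
  have hg₂ := hv.moreauR_le hg hgc hγ y
  have hh₁ := hu.moreauR_add_inner_le hh hhc hγ y
  have hh₂ := hu.moreauR_le hh hhc hγ y
  rw [abs_le, hinner]
  unfold dce
  constructor <;> linarith

theorem statement12_general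
    (g h : Euc p → EReal)
    (hg_proper : ProperFun g) (hg_convex : ConvexFun g)
    (hh_proper : ProperFun h) (hh_convex : ConvexFun h)
    (γ : ℝ) (hγ : 0 < γ) (lam : ℝ)
    (s u v splus : Euc p)
    (hu : IsProxOf h γ s u) (hv : IsProxOf g γ s v)
    (hsplus : splus = s + lam • (v - u)) :
    splus = s - (γ * lam) • gradient (dce g h γ) s ∧
      dce g h γ splus ≤ dce g h γ s - lam * (2 - lam)/(2*γ) * ‖u - v‖^2 := by
  have hbound := abs_dce_sub_sub_inner_le hg_proper hg_convex hh_proper hh_convex hγ.le hu.1 hv.1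
  have hgrad : gradient (dce g h γ) s = γ⁻¹ • (u - v) :=
    (hasGradientAt_of_abs_sub_sub_inner_le hbound).gradient
  have hstep : splus - s = (-lam) • (u - v) := by rw [hsplus]; module
  constructor
  · rw [hsplus, hgrad, smul_smul, mul_right_comm, mul_inv_cancel₀ hγ.ne', one_mul]
    module
  · have hdescent := (abs_le.mp (hbound splus)).2
    rw [hstep, real_inner_smul_left, real_inner_smul_right, real_inner_self_eq_norm_sq,
      norm_smul, mul_pow, Real.norm_eq_abs, sq_abs] at hdescent
    have hcoef : γ⁻¹ * (-lam * ‖u - v‖^2) + 1/(2*γ) * ((-lam)^2 * ‖u - v‖^2) =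
        -(lam * (2 - lam)/(2*γ) * ‖u - v‖^2) := by
      field_simp
      ring
    linarith

/-- one iteration `u = prox_{γh}(s)`, `v = prox_{γg}(s)`, `s⁺ = s + λ(v − u)`
satisfies `s⁺ = s − γλ∇φ_γ(s)` and `φ_γ(s⁺) ≤ φ_γ(s) − (λ(2 − λ)/(2γ))‖u − v‖²`. -/
theorem statement12
    (g h : Euc p → EReal)
    (hg_proper : ProperFun g) (hg_convex : ConvexFun g) (hg_lsc : LowerSemicontinuous g)
    (hh_proper : ProperFun h) (hh_convex : ConvexFun h) (hh_lsc : LowerSemicontinuous h)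
    (γ : ℝ) (hγ : 0 < γ) (lam : ℝ) (hlam0 : 0 < lam) (hlam2 : lam < 2)
    (s u v splus : Euc p)
    (hu : IsProxOf h γ s u) (hv : IsProxOf g γ s v)
    (hsplus : splus = s + lam • (v - u)) :
    splus = s - (γ * lam) • gradient (dce g h γ) s ∧
      dce g h γ splus ≤ dce g h γ s - lam * (2 - lam)/(2*γ) * ‖u - v‖^2 :=
  statement12_general g h hg_proper hg_convex hh_proper hh_convex γ hγ lam s u v splus hu hv hsplus
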